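/- Let γ > 0 and, for each k ∈ ℕ, let W^k ∈ ℝ^{N×N} be a symmetric doubly stochastic matrix whose diagonal entries are strictly positive, whose nonzero entries are all at least γ, and whose associated graph (with an edge {i,j} whenever w_{ij}^k > 0) is connected. Let m̂ = (m̂_1,…,m̂_N) ∈ (ℝ^N)^N be fixed, set φ = (1/N) Σ_{i=1}^N m̂_i and Φ = (φ,…,φ) ∈ (ℝ^N)^N. Let (α_k)_{k∈ℕ} ⊂ (0,1) satisfy α_k → 0, Σ_{k∈ℕ} α_k = +∞, and Σ_{k∈ℕ} |α_{k+1} − α_k| < +∞. Then for any x^0 ∈ (ℝ^N)^N, the iterates x^{k+1} = (1−α_k)(W^k ⊗ I_N)x^k + α_k m̂ converge to Φ. -/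

import Mathlib

/-!
Split each iterate into its block average and its disagreement with that average. Since every
`W^k` is doubly stochastic, the average follows `a^{k+1} - φ = (1 - α_k)(a^k - φ)`, and
`∏ (1 - α_k) → 0` because `Σ α_k = ∞`. On zero-sum vectors every `W^k` contracts by the uniform
factor `√(1 - γ²/N³)`: column sums turn `‖v‖² - ‖Wv‖²` into row variances, which (positive diagonal)
dominate `γ/2 · Σ_{ij} w_ij (v_i - v_j)²`, and telescoping along paths of the connected graph
bounds `‖v‖²` by that energy. The disagreement then obeys `‖d^{k+1}‖ ≤ ρ ‖d^k‖ + α_k ‖m̂ - Φ‖`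
with `ρ < 1` and `α_k → 0`, so it tends to `0`.
-/

/-- The stacked space `(ℝ^N)^N` with the Euclidean norm `‖x‖² = Σ_i ‖x_i‖²`. -/
abbrev Blk (N : ℕ) := PiLp 2 (fun _ : Fin N => EuclideanSpace ℝ (Fin N))

/-- The operator `W ⊗ I_N` acting blockwise on `(ℝ^N)^N`:
`((W ⊗ I_N)x)_i = Σ_j w_{ij} x_j`. -/
noncomputable def blockOp {N : ℕ} (W : Matrix (Fin N) (Fin N) ℝ) (x : Blk N) : Blk N :=
  (WithLp.equiv 2 ((_ : Fin N) → EuclideanSpace ℝ (Fin N))).symm fun i => ∑ j, W i j • x j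

open Finset Filter Topology

section Energy

variable {ι : Type*} [Fintype ι]

theorem sq_sum_mul_add_half_sum_sum_mul_sub_sq (w a : ι → ℝ) :
    (∑ j, w j * a j) ^ 2 + 1 / 2 * ∑ j, ∑ l, w j * w l * (a j - a l) ^ 2 =
      (∑ j, w j) * ∑ j, w j * a j ^ 2 := by
  have hexpand : ∑ j, ∑ l, w j * w l * (a j - a l) ^ 2 = ∑ j, ∑ l,
      (w j * a j ^ 2 * w l + w j * (w l * a l ^ 2) - 2 * (w j * a j * (w l * a l))) :=
    sum_congr rfl fun j _ => sum_congr rfl fun l _ => by ring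
  simp only [hexpand, sum_add_distrib, sum_sub_distrib, ← mul_sum, ← sum_mul]
  ring

theorem sum_sum_sub_sq_eq (v : ι → ℝ) :
    ∑ a, ∑ b, (v a - v b) ^ 2 = 2 * Fintype.card ι * ∑ a, v a ^ 2 - 2 * (∑ a, v a) ^ 2 := by
  have := sq_sum_mul_add_half_sum_sum_mul_sub_sq (fun _ => (1 : ℝ)) v
  simp only [one_mul, sum_const, card_univ, nsmul_eq_mul, mul_one] at this
  linarith

open Matrix

variable {M : Matrix ι ι ℝ} {γ : ℝ}

theorem sum_sq_mulVec_add_dirichlet_le (hnonneg : ∀ i j, 0 ≤ M i j)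
    (hrow : ∀ i, ∑ j, M i j = 1) (hcol : ∀ j, ∑ i, M i j = 1) (hdiag : ∀ i, γ ≤ M i i)
    (v : ι → ℝ) :
    ∑ i, (M *ᵥ v) i ^ 2 + γ / 2 * ∑ i, ∑ j, M i j * (v i - v j) ^ 2 ≤ ∑ i, v i ^ 2 := by
  have hrows : ∀ i, (M *ᵥ v) i ^ 2 + 1 / 2 * ∑ j, ∑ l, M i j * M i l * (v j - v l) ^ 2 =
      ∑ j, M i j * v j ^ 2 := fun i => by
    simpa [mulVec, dotProduct, hrow i] using sq_sum_mul_add_half_sum_sum_mul_sub_sq (M i) v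
  have hcols : ∑ i, ∑ j, M i j * v j ^ 2 = ∑ j, v j ^ 2 := by
    rw [sum_comm]; simp [← sum_mul, hcol]
  -- keep only the `i = j` summand of `Σ_i M i j * M i l`
  have hdiagonal : γ * ∑ j, ∑ l, M j l * (v j - v l) ^ 2 ≤
      ∑ i, ∑ j, ∑ l, M i j * M i l * (v j - v l) ^ 2 := calc
    _ ≤ ∑ j, ∑ l, ∑ i, M i j * M i l * (v j - v l) ^ 2 := by
      simp only [mul_sum]
      refine sum_le_sum fun j _ => sum_le_sum fun l _ => ?_
      calc γ * (M j l * (v j - v l) ^ 2) ≤ M j j * M j l * (v j - v l) ^ 2 := by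
            rw [← mul_assoc]
            exact mul_le_mul_of_nonneg_right
              (mul_le_mul_of_nonneg_right (hdiag j) (hnonneg j l)) (sq_nonneg _)
        _ ≤ ∑ i, M i j * M i l * (v j - v l) ^ 2 :=
            single_le_sum (f := fun i => M i j * M i l * (v j - v l) ^ 2)
              (fun i _ => by have := hnonneg i j; have := hnonneg i l; positivity) (mem_univ j)
    _ = ∑ i, ∑ j, ∑ l, M i j * M i l * (v j - v l) ^ 2 := by
      refine (sum_congr rfl fun j _ => ?_).trans sum_comm
      exact sum_comm
  have hsum := congrArg (fun f : ι → ℝ => ∑ i, f i) (funext hrows)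
  simp only [sum_add_distrib, ← mul_sum, hcols] at hsum
  linarith

end Energy

namespace SimpleGraph

variable {V : Type*} {G : SimpleGraph V} {f : V → ℝ} {L : ℝ}

theorem Walk.abs_sub_le_length_mul (hf : ∀ a b, G.Adj a b → |f a - f b| ≤ L) {u v : V}
    (p : G.Walk u v) : |f u - f v| ≤ p.length * L := by
  induction p with
  | nil => simp
  | @cons a b c hab q ih =>
    calc |f a - f c| ≤ |f a - f b| + |f b - f c| := abs_sub_le _ _ _
      _ ≤ L + q.length * L := add_le_add (hf a b hab) ih
      _ = (cons hab q).length * L := by rw [length_cons]; push_cast; ring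

theorem Connected.abs_sub_le_card_mul [Fintype V] (hG : G.Connected) (hL : 0 ≤ L)
    (hf : ∀ a b, G.Adj a b → |f a - f b| ≤ L) (u v : V) :
    |f u - f v| ≤ Fintype.card V * L := by
  classical
  obtain ⟨p⟩ := hG.preconnected u v
  calc |f u - f v| ≤ p.bypass.length * L := p.bypass.abs_sub_le_length_mul hf
    _ ≤ Fintype.card V * L := by
      gcongr; exact_mod_cast p.bypass_isPath.length_lt.le

end SimpleGraph

section Poincare

open Matrix

variable {ι : Type*} [Fintype ι] {M : Matrix ι ι ℝ} {γ : ℝ}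

theorem mul_sum_sq_le_dirichlet (hγ : 0 < γ) (hnonneg : ∀ i j, 0 ≤ M i j)
    (hγbd : ∀ i j, M i j ≠ 0 → γ ≤ M i j)
    (hconn : (SimpleGraph.fromRel fun i j => 0 < M i j).Connected)
    (v : ι → ℝ) (hv : ∑ i, v i = 0) :
    2 * γ * ∑ i, v i ^ 2 ≤ Fintype.card ι ^ 3 * ∑ i, ∑ j, M i j * (v i - v j) ^ 2 := by
  set D := ∑ i, ∑ j, M i j * (v i - v j) ^ 2
  set n : ℝ := (Fintype.card ι : ℝ) with hn_def
  have hterm : ∀ a b, 0 ≤ M a b * (v a - v b) ^ 2 := fun a b =>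
    mul_nonneg (hnonneg a b) (sq_nonneg _)
  have hD : 0 ≤ D := sum_nonneg fun a _ => sum_nonneg fun b _ => hterm a b
  have hn : 0 < n := by
    have := hconn.nonempty
    rw [hn_def]; exact_mod_cast Fintype.card_pos
  have hweight : ∀ a b, 0 < M a b → γ * (v a - v b) ^ 2 ≤ D := fun a b hab => calc
    γ * (v a - v b) ^ 2 ≤ M a b * (v a - v b) ^ 2 := by
      gcongr; exact hγbd a b hab.ne'
    _ ≤ D := (single_le_sum (f := fun j => M a j * (v a - v j) ^ 2) (fun j _ => hterm a j)
      (mem_univ b)).trans (single_le_sum (fun i _ => sum_nonneg fun j _ => hterm i j) (mem_univ a))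
  have hedge : ∀ a b, (SimpleGraph.fromRel fun i j => 0 < M i j).Adj a b →
      |v a - v b| ≤ √(D / γ) := by
    rintro a b ⟨-, hab | hba⟩
    all_goals refine Real.abs_le_sqrt ((le_div_iff₀' hγ).2 ?_)
    · exact hweight a b hab
    · rw [← neg_sub, neg_sq]; exact hweight b a hba
  have hpair : ∀ a b, (v a - v b) ^ 2 ≤ n ^ 2 * (D / γ) := fun a b => by
    have := hconn.abs_sub_le_card_mul (Real.sqrt_nonneg _) hedge a b
    calc (v a - v b) ^ 2 = |v a - v b| ^ 2 := (sq_abs _).symm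
      _ ≤ (n * √(D / γ)) ^ 2 := by gcongr
      _ = n ^ 2 * (D / γ) := by rw [mul_pow, Real.sq_sqrt (by positivity)]
  have htotal : 2 * n * ∑ i, v i ^ 2 ≤ n ^ 4 * D / γ := by
    calc 2 * n * ∑ i, v i ^ 2 = ∑ a, ∑ b, (v a - v b) ^ 2 := by
          rw [sum_sum_sub_sq_eq, hv]; ring
      _ ≤ ∑ _a : ι, ∑ _b : ι, n ^ 2 * (D / γ) := by gcongr with a _ b; exact hpair a b
      _ = n ^ 4 * D / γ := by simp [hn_def]; ring
  rw [le_div_iff₀ hγ] at htotal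
  exact le_of_mul_le_mul_left (by linarith) hn

theorem sum_sq_mulVec_le (hγ : 0 < γ) (hnonneg : ∀ i j, 0 ≤ M i j)
    (hrow : ∀ i, ∑ j, M i j = 1) (hcol : ∀ j, ∑ i, M i j = 1)
    (hdiag : ∀ i, 0 < M i i) (hγbd : ∀ i j, M i j ≠ 0 → γ ≤ M i j)
    (hconn : (SimpleGraph.fromRel fun i j => 0 < M i j).Connected)
    (v : ι → ℝ) (hv : ∑ i, v i = 0) :
    ∑ i, (M *ᵥ v) i ^ 2 ≤ (1 - γ ^ 2 / Fintype.card ι ^ 3) * ∑ i, v i ^ 2 := by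
  have hdissip := sum_sq_mulVec_add_dirichlet_le hnonneg hrow hcol
    (fun i => hγbd i i (hdiag i).ne') v
  have hpoinc := mul_sum_sq_le_dirichlet hγ hnonneg hγbd hconn v hv
  have hn : (0 : ℝ) < Fintype.card ι := by
    have := hconn.nonempty
    exact_mod_cast Fintype.card_pos
  have : γ ^ 2 / Fintype.card ι ^ 3 * ∑ i, v i ^ 2 ≤
      γ / 2 * ∑ i, ∑ j, M i j * (v i - v j) ^ 2 := by
    rw [div_mul_eq_mul_div, div_le_iff₀ (by positivity)]
    nlinarith
  linarith

end Poincare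

section Blocks

variable {N : ℕ}

open Matrix

theorem blockOp_apply (M : Matrix (Fin N) (Fin N) ℝ) (x : Blk N) (i : Fin N) :
    blockOp M x i = ∑ j, M i j • x j := rfl

theorem blockOp_apply_apply (M : Matrix (Fin N) (Fin N) ℝ) (x : Blk N) (i c : Fin N) :
    blockOp M x i c = (M *ᵥ fun j => x j c) i := by
  simp [blockOp_apply, mulVec, dotProduct]

theorem norm_sq_blk (x : Blk N) : ‖x‖ ^ 2 = ∑ c, ∑ i, x i c ^ 2 := by
  rw [PiLp.norm_sq_eq_of_L2, sum_comm]
  simp [EuclideanSpace.real_norm_sq_eq]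

theorem norm_blockOp_le {M : Matrix (Fin N) (Fin N) ℝ} {c : ℝ}
    (h : ∀ v : Fin N → ℝ, ∑ i, v i = 0 → ∑ i, (M *ᵥ v) i ^ 2 ≤ c * ∑ i, v i ^ 2)
    (x : Blk N) (hx : ∑ i, x i = 0) : ‖blockOp M x‖ ≤ √c * ‖x‖ := by
  rw [← Real.sqrt_sq (norm_nonneg (blockOp M x)), ← Real.sqrt_sq (norm_nonneg x),
    ← Real.sqrt_mul' c (sq_nonneg _)]
  gcongr
  simp only [norm_sq_blk, blockOp_apply_apply]
  rw [mul_sum]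
  refine sum_le_sum fun m _ => h _ ?_
  simpa using congrArg (· m) hx

end Blocks

theorem tendsto_zero_of_le_mul_add {b ε : ℕ → ℝ} {ρ : ℝ} (hρ0 : 0 ≤ ρ) (hρ1 : ρ < 1)
    (hb : ∀ k, 0 ≤ b k) (hrec : ∀ k, b (k + 1) ≤ ρ * b k + ε k)
    (hε : Tendsto ε atTop (𝓝 0)) : Tendsto b atTop (𝓝 0) := by
  refine tendsto_order.2 ⟨fun a ha => .of_forall fun k => ha.trans_le (hb k), fun e he => ?_⟩
  obtain ⟨n, hn⟩ := eventually_atTop.1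
    (hε.eventually (gt_mem_nhds (mul_pos (sub_pos.2 hρ1) (half_pos he))))
  -- once `ε k < (1 - ρ) e / 2`, the excess of `b` over `e / 2` contracts by `ρ`
  have hgeom : ∀ m, b (n + m) - e / 2 ≤ ρ ^ m * (b n - e / 2) := by
    intro m
    induction m with
    | zero => simp
    | succ m ih =>
      calc b (n + m + 1) - e / 2 ≤ ρ * (b (n + m) - e / 2) := by
            nlinarith [hrec (n + m), hn (n + m) (by omega)]
        _ ≤ ρ ^ (m + 1) * (b n - e / 2) := by
            rw [pow_succ', mul_assoc]; exact mul_le_mul_of_nonneg_left ih hρ0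
  have htail : Tendsto (fun m => ρ ^ m * (b n - e / 2)) atTop (𝓝 0) := by
    simpa using (tendsto_pow_atTop_nhds_zero_of_lt_one hρ0 hρ1).mul_const (b n - e / 2)
  obtain ⟨m₀, hm₀⟩ := eventually_atTop.1 (htail.eventually (gt_mem_nhds (half_pos he)))
  refine eventually_atTop.2 ⟨n + m₀, fun k hk => ?_⟩
  obtain ⟨m, rfl⟩ := Nat.exists_eq_add_of_le (le_trans (Nat.le_add_right n m₀) hk)
  linarith [hgeom m, hm₀ m (by omega)]

theorem tendsto_prod_one_sub_of_tendsto_sum {α : ℕ → ℝ} (hα : ∀ k, α k ≤ 1)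
    (hdiv : Tendsto (fun n => ∑ k ∈ range n, α k) atTop atTop) :
    Tendsto (fun n => ∏ k ∈ range n, (1 - α k)) atTop (𝓝 0) := by
  refine squeeze_zero (fun n => prod_nonneg fun k _ => sub_nonneg.2 (hα k)) (fun n => ?_)
    (Real.tendsto_exp_atBot.comp (tendsto_neg_atTop_atBot.comp hdiv))
  calc ∏ k ∈ range n, (1 - α k) ≤ ∏ k ∈ range n, Real.exp (-α k) :=
        prod_le_prod (fun k _ => sub_nonneg.2 (hα k)) fun k _ => by
          linarith [Real.add_one_le_exp (-α k)]
    _ = Real.exp (-∑ k ∈ range n, α k) := by rw [← Real.exp_sum, sum_neg_distrib]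

section Consensus

variable {N : ℕ}

noncomputable def blkMean (x : Blk N) : EuclideanSpace ℝ (Fin N) := (N : ℝ)⁻¹ • ∑ i, x i

def blkConst (y : EuclideanSpace ℝ (Fin N)) : Blk N := WithLp.toLp 2 fun _ => y

@[simp]
theorem blkConst_apply (y : EuclideanSpace ℝ (Fin N)) (i : Fin N) : blkConst y i = y := rfl

theorem continuous_blkConst : Continuous (blkConst : EuclideanSpace ℝ (Fin N) → Blk N) :=
  (PiLp.continuous_toLp 2 _).comp (continuous_pi fun _ => continuous_id)

theorem blkMean_add_smul (a b : ℝ) (x y : Blk N) :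
    blkMean (a • x + b • y) = a • blkMean x + b • blkMean y := by
  simp only [blkMean, PiLp.add_apply, PiLp.smul_apply, sum_add_distrib, ← smul_sum]
  module

theorem blkMean_blockOp {M : Matrix (Fin N) (Fin N) ℝ} (hcol : ∀ j, ∑ i, M i j = 1)
    (x : Blk N) : blkMean (blockOp M x) = blkMean x := by
  simp only [blkMean, blockOp_apply]
  rw [sum_comm]
  simp [← sum_smul, hcol]

theorem blockOp_sub_blkConst {M : Matrix (Fin N) (Fin N) ℝ} (hrow : ∀ i, ∑ j, M i j = 1)
    (x : Blk N) (y : EuclideanSpace ℝ (Fin N)) :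
    blockOp M (x - blkConst y) = blockOp M x - blkConst y := by
  ext1 i
  simp [blockOp_apply, smul_sub, sum_sub_distrib, ← sum_smul, hrow]

theorem sum_sub_blkConst_blkMean (x : Blk N) : ∑ i, (x - blkConst (blkMean x)) i = 0 := by
  rcases Nat.eq_zero_or_pos N with rfl | hN
  · simp
  · simp [blkMean, sum_sub_distrib, ← Nat.cast_smul_eq_nsmul ℝ, smul_smul, hN.ne']

end Consensus

section Iteration

variable {N : ℕ} {W : ℕ → Matrix (Fin N) (Fin N) ℝ} {α : ℕ → ℝ} {mh : Blk N} {x : ℕ → Blk N}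

theorem blkMean_iterate (hcol : ∀ k j, ∑ i, W k i j = 1)
    (hx : ∀ k, x (k + 1) = (1 - α k) • blockOp (W k) (x k) + α k • mh) (k : ℕ) :
    blkMean (x (k + 1)) = (1 - α k) • blkMean (x k) + α k • blkMean mh := by
  rw [hx, blkMean_add_smul, blkMean_blockOp (hcol k)]

theorem tendsto_blkMean_iterate (hcol : ∀ k j, ∑ i, W k i j = 1) (hα : ∀ k, α k ≤ 1)
    (hdiv : Tendsto (fun n => ∑ k ∈ range n, α k) atTop atTop)
    (hx : ∀ k, x (k + 1) = (1 - α k) • blockOp (W k) (x k) + α k • mh) :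
    Tendsto (fun k => blkMean (x k)) atTop (𝓝 (blkMean mh)) := by
  have hprod : ∀ k, blkMean (x k) - blkMean mh =
      (∏ j ∈ range k, (1 - α j)) • (blkMean (x 0) - blkMean mh) := by
    intro k
    induction k with
    | zero => simp
    | succ k ih =>
      rw [prod_range_succ, mul_comm, mul_smul, ← ih, blkMean_iterate hcol hx]
      module
  rw [← tendsto_sub_nhds_zero_iff, funext hprod]
  simpa using (tendsto_prod_one_sub_of_tendsto_sum hα hdiv).smul_const
    (blkMean (x 0) - blkMean mh)

theorem tendsto_sub_blkConst_blkMean_iterate (hrow : ∀ k i, ∑ j, W k i j = 1)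
    (hcol : ∀ k j, ∑ i, W k i j = 1) {ρ : ℝ} (hρ0 : 0 ≤ ρ) (hρ1 : ρ < 1)
    (hcontr : ∀ k (y : Blk N), ∑ i, y i = 0 → ‖blockOp (W k) y‖ ≤ ρ * ‖y‖)
    (hα : ∀ k, 0 ≤ α k ∧ α k ≤ 1) (hα0 : Tendsto α atTop (𝓝 0))
    (hx : ∀ k, x (k + 1) = (1 - α k) • blockOp (W k) (x k) + α k • mh) :
    Tendsto (fun k => x k - blkConst (blkMean (x k))) atTop (𝓝 0) := by
  set d := fun k => x k - blkConst (blkMean (x k))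
  set C := ‖mh - blkConst (blkMean mh)‖
  have hd : ∀ k, d (k + 1) =
      (1 - α k) • blockOp (W k) (d k) + α k • (mh - blkConst (blkMean mh)) := by
    intro k
    simp only [d]
    rw [blkMean_iterate hcol hx, blockOp_sub_blkConst (hrow k), hx]
    ext1 i
    simp only [PiLp.add_apply, PiLp.sub_apply, PiLp.smul_apply, blkConst_apply]
    module
  have hnorm : ∀ k, ‖d (k + 1)‖ ≤ ρ * ‖d k‖ + α k * C := by
    intro k
    obtain ⟨hαk0, hαk1⟩ := hα k
    calc ‖d (k + 1)‖ ≤ (1 - α k) * ‖blockOp (W k) (d k)‖ + α k * C := by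
          rw [hd]
          refine (norm_add_le _ _).trans_eq ?_
          rw [norm_smul, norm_smul, Real.norm_of_nonneg (sub_nonneg.2 hαk1),
            Real.norm_of_nonneg hαk0]
      _ ≤ ρ * ‖d k‖ + α k * C := add_le_add_left
          ((mul_le_of_le_one_left (norm_nonneg _) (by linarith)).trans
            (hcontr k _ (sum_sub_blkConst_blkMean _))) _
  rw [tendsto_zero_iff_norm_tendsto_zero]
  exact tendsto_zero_of_le_mul_add hρ0 hρ1 (fun k => norm_nonneg _) hnorm
    (by simpa using hα0.mul_const C)

end Iteration

theorem stmt_13_general (N : ℕ) (γ : ℝ) (hγ : 0 < γ)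
    (W : ℕ → Matrix (Fin N) (Fin N) ℝ)
    (hnonneg : ∀ k i j, 0 ≤ W k i j)
    (hrow : ∀ k i, ∑ j, W k i j = 1)
    (hcol : ∀ k j, ∑ i, W k i j = 1)
    (hdiag : ∀ k i, 0 < W k i i)
    (hγbd : ∀ k i j, W k i j ≠ 0 → γ ≤ W k i j)
    (hconn : ∀ k, (SimpleGraph.fromRel fun i j => 0 < W k i j).Connected)
    (mh : Blk N)
    (φ : EuclideanSpace ℝ (Fin N)) (hφ : φ = (1 / (N : ℝ)) • ∑ i, mh i)
    (Φ : Blk N)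
    (hΦ : Φ = (WithLp.equiv 2 ((_ : Fin N) → EuclideanSpace ℝ (Fin N))).symm fun _ => φ)
    (α : ℕ → ℝ) (hα : ∀ k, 0 < α k ∧ α k < 1)
    (hα0 : Filter.Tendsto α Filter.atTop (nhds 0))
    (hαdiv : Filter.Tendsto (fun n => ∑ k ∈ Finset.range n, α k) Filter.atTop Filter.atTop)
    (x : ℕ → Blk N)
    (hx : ∀ k, x (k + 1) = (1 - α k) • blockOp (W k) (x k) + α k • mh) :
    Filter.Tendsto x Filter.atTop (nhds Φ) := by
  have hN : (0 : ℝ) < N := by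
    have := (hconn 0).nonempty
    exact_mod_cast Fin.pos_iff_nonempty.2 this
  have hΦ_eq : Φ = blkConst (blkMean mh) := by rw [hΦ, hφ, one_div]; rfl
  have hρ1 : √(1 - γ ^ 2 / N ^ 3) < 1 := by
    rw [Real.sqrt_lt' one_pos]
    linarith [show 0 < γ ^ 2 / (N : ℝ) ^ 3 by positivity]
  have hcontr : ∀ k (y : Blk N), ∑ i, y i = 0 →
      ‖blockOp (W k) y‖ ≤ √(1 - γ ^ 2 / N ^ 3) * ‖y‖ := fun k =>
    norm_blockOp_le fun v hv => by
      simpa using sum_sq_mulVec_le hγ (hnonneg k) (hrow k) (hcol k) (hdiag k) (hγbd k)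
        (hconn k) v hv
  have hmean := (continuous_blkConst.tendsto _).comp
    (tendsto_blkMean_iterate hcol (fun k => (hα k).2.le) hαdiv hx)
  have hdisagree := tendsto_sub_blkConst_blkMean_iterate hrow hcol (Real.sqrt_nonneg _) hρ1
    hcontr (fun k => ⟨(hα k).1.le, (hα k).2.le⟩) hα0 hx
  simpa [hΦ_eq] using hdisagree.add hmean

/-- with connected communication graphs, weights bounded below by `γ`, and
diminishing step sizes `α_k → 0`, `Σ α_k = ∞`, `Σ |α_{k+1} − α_k| < ∞`, the iterates
`x^{k+1} = (1−α_k)(W^k ⊗ I_N)x^k + α_k m̂` converge to the stacked Shapley value `Φ`. -/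
theorem stmt_13 (N : ℕ) (γ : ℝ) (hγ : 0 < γ)
    (W : ℕ → Matrix (Fin N) (Fin N) ℝ)
    (hsymm : ∀ k, (W k).IsSymm)
    (hnonneg : ∀ k i j, 0 ≤ W k i j)
    (hrow : ∀ k i, ∑ j, W k i j = 1)
    (hcol : ∀ k j, ∑ i, W k i j = 1)
    (hdiag : ∀ k i, 0 < W k i i)
    (hγbd : ∀ k i j, W k i j ≠ 0 → γ ≤ W k i j)
    (hconn : ∀ k, (SimpleGraph.fromRel fun i j => 0 < W k i j).Connected)
    (mh : Blk N)
    (φ : EuclideanSpace ℝ (Fin N)) (hφ : φ = (1 / (N : ℝ)) • ∑ i, mh i)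
    (Φ : Blk N)
    (hΦ : Φ = (WithLp.equiv 2 ((_ : Fin N) → EuclideanSpace ℝ (Fin N))).symm fun _ => φ)
    (α : ℕ → ℝ) (hα : ∀ k, 0 < α k ∧ α k < 1)
    (hα0 : Filter.Tendsto α Filter.atTop (nhds 0))
    (hαdiv : Filter.Tendsto (fun n => ∑ k ∈ Finset.range n, α k) Filter.atTop Filter.atTop)
    (hαvar : Summable fun k => |α (k + 1) - α k|)
    (x : ℕ → Blk N)
    (hx : ∀ k, x (k + 1) = (1 - α k) • blockOp (W k) (x k) + α k • mh) :
    Filter.Tendsto x Filter.atTop (nhds Φ) :=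
  stmt_13_general N γ hγ W hnonneg hrow hcol hdiag hγbd hconn mh φ hφ Φ hΦ α hα hα0 hαdiv x hx
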